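/- Let p ≥ 2, k ≥ 1, m ≥ 1 be integers, let G = G^{p−1,m}_{p,pk+1}, and let λ' denote the element ((xy)^k x y^m)^{p−1}(xy)^k x of G. Suppose ρ : G → Homeo⁺(ℝ) is a group homomorphism such that ρ(x)α > α for all α ∈ ℝ. Then ρ(x^{−((p−1)m+pk+p)} λ')α > ρ(y)α for all α ∈ ℝ. -/
import Mathlib


def X : FreeGroup (Fin 2) := FreeGroup.of 0
def Y : FreeGroup (Fin 2) := FreeGroup.of 1

/-- The word `z = (xy)^{k+1}((xy)^k x)⁻¹`. -/
def Zw (k : ℤ) : FreeGroup (Fin 2) := (X * Y) ^ (k + 1) * ((X * Y) ^ k * X)⁻¹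

/-- The relator of the knot group `G^{p-1,m}_{p,pk+1}`:
`(x z^m (xy)^k)^{p-2} x (xy)^k x = (z^m (xy)^k)^{p-2}(xy)^{k+1}`. -/
def relB (p k m : ℤ) : FreeGroup (Fin 2) :=
  (X * (Zw k) ^ m * (X * Y) ^ k) ^ (p - 2) * X * (X * Y) ^ k * X *
    (((Zw k) ^ m * (X * Y) ^ k) ^ (p - 2) * (X * Y) ^ (k + 1))⁻¹

/-- Key algebraic consequences of the relator. -/
lemma key_ids {G : Type*} [Group G] (p k m : ℤ) (x y zz : G)
    (hzz : zz = (x*y)^(k+1) * ((x*y)^k * x)⁻¹)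
    (hrel : (x * zz^m * (x*y)^k)^(p-2) * x * (x*y)^k * x
          = (zz^m * (x*y)^k)^(p-2) * (x*y)^(k+1)) :
    (x * (zz^m * (x*y)^k))^(p-2) * x = (zz^m * (x*y)^k)^(p-2) * zz ∧
    ((x*y)^k * x * y^m)^(p-1) * ((x*y)^k * x)
      = x * (zz^m * (x*y)^k * x)^(p-2) * zz^(m-1) * (x*y)^(2*k) * x * y := by
  set t := x*y with ht
  set a := t^k * x with ha
  set V := zz^m * t^k with hV
  have hpow : ∀ g : G, g^(p-1) = g * g^(p-2) := fun g => by
    rw [← zpow_one_add]; congr 1; ring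
  have hpow' : ∀ g : G, g^(p-1) = g^(p-2) * g := fun g => by
    rw [← zpow_add_one]; congr 1; ring
  have hE1 : zz * a = t^(k+1) := by rw [hzz, inv_mul_cancel_right]
  have hE2 : a * y = t^(k+1) := by rw [ha, zpow_add, zpow_one, mul_assoc]
  have hE3 : a * y^m = zz^m * a :=
    (show SemiconjBy a y zz from hE2.trans hE1.symm).zpow_right m
  have hE5 : x * (V*x)^(p-2) = (x*V)^(p-2) * x :=
    (show SemiconjBy x (V*x) (x*V) from (mul_assoc x V x).symm).zpow_right (p-2)
  have hrel'' : (x*V)^(p-2) * x * a = V^(p-2) * zz * a := by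
    rw [mul_assoc (V^(p-2)) zz a, hE1, ha, ← mul_assoc ((x*V)^(p-2) * x) (t^k) x,
      hV, ← mul_assoc x (zz^m) (t^k)]
    exact hrel
  have key : (x*V)^(p-2) * x = V^(p-2) * zz := mul_right_cancel hrel''
  refine ⟨key, ?_⟩
  have hW : a * y^m = V * x := by rw [hE3, ha, hV, mul_assoc]
  have hL : (a*y^m)^(p-1) * a = V^(p-1) * t^(k+1) := by
    calc (a*y^m)^(p-1) * a = (V*x)^(p-1) * a := by rw [hW]
    _ = (V*x) * (V*x)^(p-2) * a := by rw [← hpow]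
    _ = V * (x * (V*x)^(p-2)) * a := by rw [mul_assoc V x ((V*x)^(p-2))]
    _ = V * ((x*V)^(p-2) * x) * a := by rw [hE5]
    _ = V * (V^(p-2) * zz) * a := by rw [key]
    _ = V^(p-1) * (zz * a) := by rw [hpow V]; simp only [mul_assoc]
    _ = V^(p-1) * t^(k+1) := by rw [hE1]
  have hR : x * (V*x)^(p-2) * zz^(m-1) * t^(2*k) * x * y = V^(p-1) * t^(k+1) := by
    rw [hE5, key]
    calc V^(p-2) * zz * zz^(m-1) * t^(2*k) * x * y
        = V^(p-2) * zz^m * (t^k * t^k) * x * y := by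
          rw [mul_assoc (V^(p-2)) zz (zz^(m-1)), ← zpow_one_add, ← zpow_add]
          congr 3
          · congr 1; ring
          · congr 1; ring
    _ = V^(p-2) * V * (t^k * x * y) := by
          rw [hV]; simp only [mul_assoc]
    _ = V^(p-2) * V * (a * y) := by rw [← ha]
    _ = V^(p-2) * V * t^(k+1) := by rw [hE2]
    _ = V^(p-1) * t^(k+1) := by rw [← hpow']
  rw [hL, hR]

/- Pointwise lemmas about order isomorphisms of `ℝ`. -/

lemma oi_pow_apply_le {f g : ℝ ≃o ℝ} (h : ∀ α, f α ≤ g α) :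
    ∀ (n : ℕ) (α : ℝ), (f ^ n) α ≤ (g ^ n) α := by
  intro n
  induction n with
  | zero => intro α; simp
  | succ n ih =>
    intro α
    have h1 : (f ^ (n+1)) α = (f ^ n) (f α) := by rw [pow_succ]; rfl
    have h2 : (g ^ (n+1)) α = (g ^ n) (g α) := by rw [pow_succ]; rfl
    rw [h1, h2]
    exact le_trans (ih (f α)) ((g ^ n).monotone (h α))

lemma oi_pow_apply_lt {f g : ℝ ≃o ℝ} (h : ∀ α, f α < g α) :
    ∀ (n : ℕ), 1 ≤ n → ∀ (α : ℝ), (f ^ n) α < (g ^ n) α := by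
  intro n
  induction n with
  | zero => omega
  | succ n ih =>
    intro _ α
    rcases Nat.eq_zero_or_pos n with h0 | h0
    · subst h0; simpa using h α
    have h1 : (f ^ (n+1)) α = (f ^ n) (f α) := by rw [pow_succ]; rfl
    have h2 : (g ^ (n+1)) α = (g ^ n) (g α) := by rw [pow_succ]; rfl
    rw [h1, h2]
    exact lt_trans (ih h0 (f α)) ((g ^ n).strictMono (h α))

lemma oi_appp (f : ℝ ≃o ℝ) (i j : ℕ) (γ : ℝ) : (f^i) ((f^j) γ) = (f^(i+j)) γ := by
  rw [pow_add]; rfl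

lemma oi_collapse (f : ℝ ≃o ℝ) (i j l : ℕ) (h : i + j = l) (γ : ℝ) :
    (f^i) ((f^j) γ) = (f^l) γ := by rw [oi_appp, h]

lemma oi_appc' (f : ℝ ≃o ℝ) (i l : ℕ) (h : i + 1 = l) (γ : ℝ) :
    f ((f^i) γ) = (f^l) γ := by rw [← h, pow_succ']; rfl

lemma oi_appb (f : ℝ ≃o ℝ) (i l : ℕ) (h : i + 1 = l) (γ : ℝ) :
    (f^i) (f γ) = (f^l) γ := by
  have h1 : f γ = (f^1) γ := by rw [pow_one]
  rw [h1, oi_appp, h]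

theorem statement13 (p k m : ℤ) (hp : 2 ≤ p) (hk : 1 ≤ k) (hm : 1 ≤ m)
    (x y lam : PresentedGroup ({relB p k m} : Set (FreeGroup (Fin 2))))
    (hx : x = PresentedGroup.of 0) (hy : y = PresentedGroup.of 1)
    (hlam : lam = ((x * y) ^ k * x * y ^ m) ^ (p - 1) * (x * y) ^ k * x)
    (ρ : PresentedGroup ({relB p k m} : Set (FreeGroup (Fin 2))) →* (ℝ ≃o ℝ))
    (hρ : ∀ α : ℝ, α < ρ x α) :
    ∀ α : ℝ, ρ y α < ρ (x ^ (-((p - 1) * m + p * k + p)) * lam) α := by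
  classical
  set π : FreeGroup (Fin 2) →* PresentedGroup ({relB p k m} : Set (FreeGroup (Fin 2))) :=
    PresentedGroup.mk ({relB p k m} : Set (FreeGroup (Fin 2))) with hπ
  have hπX : π X = x := by rw [hx]; rfl
  have hπY : π Y = y := by rw [hy]; rfl
  have hrel0 : π (relB p k m) = 1 :=
    (QuotientGroup.eq_one_iff _).mpr (Subgroup.subset_normalClosure (Set.mem_singleton _))
  have hzz0 : π (Zw k) = (x*y)^(k+1) * ((x*y)^k * x)⁻¹ := by
    rw [Zw]
    simp only [map_mul, map_zpow, map_inv, hπX, hπY]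
  have hrelG : (x * (π (Zw k))^m * (x*y)^k)^(p-2) * x * (x*y)^k * x
             = ((π (Zw k))^m * (x*y)^k)^(p-2) * (x*y)^(k+1) := by
    have h : π ((X * (Zw k) ^ m * (X * Y) ^ k) ^ (p - 2) * X * (X * Y) ^ k * X *
        (((Zw k) ^ m * (X * Y) ^ k) ^ (p - 2) * (X * Y) ^ (k + 1))⁻¹) = 1 := hrel0
    simp only [map_mul, map_zpow, map_inv, hπX, hπY] at h
    exact mul_inv_eq_one.mp h
  set zz : PresentedGroup ({relB p k m} : Set (FreeGroup (Fin 2))) := π (Zw k) with hzzdef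
  obtain ⟨key, hmain⟩ := key_ids p k m x y zz hzz0 hrelG
  have hlam2 : lam = x * (zz^m * (x*y)^k * x)^(p-2) * zz^(m-1) * (x*y)^(2*k) * x * y := by
    rw [hlam, mul_assoc, hmain]
  have g3 : zz * ((x*y)^k * x) = (x*y)^(k+1) := by rw [hzz0, inv_mul_cancel_right]
  have g4 : ((x*y)^k * x) * y = zz * ((x*y)^k * x) := by
    rw [g3, zpow_add, zpow_one, mul_assoc]
  -- natural-number exponents
  set n2 : ℕ := (p-2).toNat with hn2def
  set K : ℕ := k.toNat with hKdef
  set M : ℕ := m.toNat with hMdef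
  set M1 : ℕ := (m-1).toNat with hM1def
  set Nn : ℕ := ((p-1)*m+p*k+p).toNat with hNndef
  have hn2 : ((n2 : ℤ)) = p - 2 := Int.toNat_of_nonneg (by omega)
  have hK : ((K : ℤ)) = k := Int.toNat_of_nonneg (by omega)
  have hM : ((M : ℤ)) = m := Int.toNat_of_nonneg (by omega)
  have hM1 : ((M1 : ℤ)) = m - 1 := Int.toNat_of_nonneg (by omega)
  have hNn : ((Nn : ℤ)) = (p-1)*m+p*k+p := by
    have h1 : 0 ≤ (p-1)*m := mul_nonneg (by omega) (by omega)
    have h2 : 0 ≤ p*k := mul_nonneg (by omega) (by omega)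
    exact Int.toNat_of_nonneg (by omega)
  have hKpos : 1 ≤ K := by omega
  have h2K : ((2*K : ℕ) : ℤ) = 2*k := by push_cast; omega
  have hK1c : ((K+1 : ℕ) : ℤ) = k+1 := by push_cast; omega
  -- pointwise application lemmas
  have appMul : ∀ (g h : PresentedGroup ({relB p k m} : Set (FreeGroup (Fin 2)))) (β : ℝ),
      ρ (g*h) β = ρ g (ρ h β) := fun g h β => by rw [map_mul]; rfl
  have appPow : ∀ (g : PresentedGroup ({relB p k m} : Set (FreeGroup (Fin 2)))) (e : ℤ)
      (n : ℕ), ((n:ℤ) = e) → ∀ β : ℝ, ρ (g^e) β = ((ρ g)^n) β := fun g e n he β => by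
    rw [← he, zpow_natCast, map_pow]
  -- pointwise inequalities
  have f3le : ∀ γ : ℝ, ρ x γ ≤ ρ zz γ := by
    intro γ
    have hkey : ρ ((x * (zz^m*(x*y)^k))^(p-2) * x) γ = ρ ((zz^m*(x*y)^k)^(p-2) * zz) γ := by
      rw [key]
    rw [appMul, appMul, appPow _ _ n2 hn2, appPow _ _ n2 hn2] at hkey
    have hUV : ∀ δ : ℝ, ρ (zz^m*(x*y)^k) δ ≤ ρ (x * (zz^m*(x*y)^k)) δ := fun δ => by
      rw [appMul x (zz^m*(x*y)^k)]; exact (hρ _).le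
    have h1 := oi_pow_apply_le hUV n2 (ρ x γ)
    rw [hkey] at h1
    exact ((ρ (zz^m*(x*y)^k))^n2).le_iff_le.mp h1
  have f4 : ∀ γ : ℝ, γ < ρ y γ := by
    intro γ
    have h : ρ (((x*y)^k*x)*y) γ = ρ (zz*((x*y)^k*x)) γ := by rw [g4]
    rw [appMul ((x*y)^k*x) y, appMul zz ((x*y)^k*x)] at h
    have h2 : ρ ((x*y)^k*x) γ < ρ ((x*y)^k*x) (ρ y γ) := by
      rw [h]
      exact lt_of_lt_of_le (hρ _) (f3le _)
    exact (ρ ((x*y)^k*x)).lt_iff_lt.mp h2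
  have f5 : ∀ γ : ℝ, ρ x γ < ρ (x*y) γ := fun γ => by
    rw [appMul]; exact (ρ x).strictMono (f4 γ)
  have f9 : ∀ γ : ℝ, ((ρ x)^(K+2)) γ < ((ρ (x*y))^(K+1)) γ := by
    intro γ
    have e1 : ((ρ (x*y))^(K+1)) γ = ρ zz (((ρ (x*y))^K) (ρ x γ)) := by
      rw [← appPow (x*y) (k+1) (K+1) hK1c γ, ← g3, appMul, appMul, appPow (x*y) k K hK]
    have c1 : ρ x (((ρ x)^K) (ρ x γ)) = ((ρ x)^(K+2)) γ := by
      rw [oi_appb (ρ x) K (K+1) rfl, oi_appc' (ρ x) (K+1) (K+2) rfl]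
    calc ((ρ x)^(K+2)) γ = ρ x (((ρ x)^K) (ρ x γ)) := c1.symm
    _ < ρ x (((ρ (x*y))^K) (ρ x γ)) := (ρ x).strictMono (oi_pow_apply_lt f5 K hKpos _)
    _ ≤ ρ zz (((ρ (x*y))^K) (ρ x γ)) := f3le _
    _ = ((ρ (x*y))^(K+1)) γ := e1.symm
  have f10 : ∀ γ : ℝ, ((ρ x)^(2*K+1)) γ < ρ ((x*y)^(2*k)) γ := by
    intro γ
    have e2 : ρ ((x*y)^(2*k)) γ = ((ρ (x*y))^(K-1)) (((ρ (x*y))^(K+1)) γ) := by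
      rw [appPow (x*y) (2*k) (2*K) h2K γ, oi_collapse (ρ (x*y)) (K-1) (K+1) (2*K) (by omega)]
    rw [e2]
    calc ((ρ x)^(2*K+1)) γ = ((ρ x)^(K-1)) (((ρ x)^(K+2)) γ) :=
          (oi_collapse (ρ x) (K-1) (K+2) (2*K+1) (by omega) γ).symm
    _ < ((ρ x)^(K-1)) (((ρ (x*y))^(K+1)) γ) := ((ρ x)^(K-1)).strictMono (f9 γ)
    _ ≤ ((ρ (x*y))^(K-1)) (((ρ (x*y))^(K+1)) γ) :=
          oi_pow_apply_le (fun δ => (f5 δ).le) (K-1) _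
  have f11 : ∀ γ : ℝ, ((ρ x)^(M+K+1)) γ ≤ ρ (zz^m*(x*y)^k*x) γ := by
    intro γ
    have e3 : ρ (zz^m*(x*y)^k*x) γ = ((ρ zz)^M) (((ρ (x*y))^K) (ρ x γ)) := by
      rw [appMul, appMul, appPow zz m M hM, appPow (x*y) k K hK]
    rw [e3]
    have c2 : ((ρ x)^M) (((ρ x)^K) (ρ x γ)) = ((ρ x)^(M+K+1)) γ := by
      rw [oi_appb (ρ x) K (K+1) rfl, oi_collapse (ρ x) M (K+1) (M+K+1) (by omega)]
    calc ((ρ x)^(M+K+1)) γ = ((ρ x)^M) (((ρ x)^K) (ρ x γ)) := c2.symm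
    _ ≤ ((ρ x)^M) (((ρ (x*y))^K) (ρ x γ)) :=
          ((ρ x)^M).monotone (oi_pow_apply_le (fun δ => (f5 δ).le) K _)
    _ ≤ ((ρ zz)^M) (((ρ (x*y))^K) (ρ x γ)) := oi_pow_apply_le f3le M _
  have f12 : ∀ γ : ℝ, ((ρ x)^((M+K+1)*n2)) γ ≤ ((ρ (zz^m*(x*y)^k*x))^n2) γ := by
    intro γ
    have h1 := oi_pow_apply_le f11 n2 γ
    rw [← pow_mul] at h1
    exact h1
  -- final exponent computation
  have hNeq : ((M+K+1)*n2 + (M1+(2*K+2))) + 1 = Nn := by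
    have hcast : (((((M+K+1)*n2 + (M1+(2*K+2))) + 1 : ℕ)) : ℤ) = ((Nn : ℕ) : ℤ) := by
      push_cast
      rw [hn2, hK, hM, hM1, hNn]
      ring
    exact_mod_cast hcast
  -- conclusion
  intro α
  have hNne : -((p-1)*m+p*k+p) = -(Nn:ℤ) := by rw [hNn]
  have hx1 : ρ (x ^ (-((p - 1) * m + p * k + p)) * lam) α = (((ρ x)^Nn)⁻¹ : ℝ ≃o ℝ) (ρ lam α) := by
    have hζ : ρ (x ^ (-((p - 1) * m + p * k + p))) = (((ρ x)^Nn)⁻¹ : ℝ ≃o ℝ) := by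
      rw [hNne, map_zpow, zpow_neg, zpow_natCast]
    rw [appMul, hζ]
  rw [hx1]
  have hlamα : ρ lam α = ρ x (((ρ (zz^m*(x*y)^k*x))^n2)
      (((ρ zz)^M1) (ρ ((x*y)^(2*k)) (ρ x (ρ y α))))) := by
    rw [hlam2, appMul, appMul, appMul, appMul, appMul,
      appPow (zz^m*(x*y)^k*x) (p-2) n2 hn2, appPow zz (m-1) M1 hM1]
  have hS : ((ρ x)^Nn) (ρ y α) < ρ lam α := by
    rw [hlamα]
    calc ((ρ x)^Nn) (ρ y α)
        = ρ x (((ρ x)^((M+K+1)*n2)) (((ρ x)^M1) (((ρ x)^(2*K+1)) (ρ x (ρ y α))))) := by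
          rw [oi_appb (ρ x) (2*K+1) (2*K+2) rfl,
            oi_collapse (ρ x) M1 (2*K+2) (M1+(2*K+2)) rfl,
            oi_collapse (ρ x) ((M+K+1)*n2) (M1+(2*K+2)) ((M+K+1)*n2 + (M1+(2*K+2))) rfl,
            oi_appc' (ρ x) ((M+K+1)*n2 + (M1+(2*K+2))) Nn hNeq]
    _ < ρ x (((ρ x)^((M+K+1)*n2)) (((ρ x)^M1) (ρ ((x*y)^(2*k)) (ρ x (ρ y α))))) :=
          (ρ x).strictMono (((ρ x)^((M+K+1)*n2)).strictMono
            (((ρ x)^M1).strictMono (f10 _)))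
    _ ≤ ρ x (((ρ x)^((M+K+1)*n2)) (((ρ zz)^M1) (ρ ((x*y)^(2*k)) (ρ x (ρ y α))))) :=
          (ρ x).monotone (((ρ x)^((M+K+1)*n2)).monotone (oi_pow_apply_le f3le M1 _))
    _ ≤ ρ x (((ρ (zz^m*(x*y)^k*x))^n2) (((ρ zz)^M1) (ρ ((x*y)^(2*k)) (ρ x (ρ y α))))) :=
          (ρ x).monotone (f12 _)
  refine (((ρ x)^Nn) : ℝ ≃o ℝ).lt_iff_lt.mp ?_
  rw [RelIso.apply_inv_self]
  exact hS
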